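/- Let r ≤ T be real numbers, L, M ≥ 0, and let b : ℝ → ℝ be twice differentiable with |b′(x)| ≤ L and |b″(x)| ≤ M for all x ∈ ℝ. Let ω, η, ζ : [r,T] → ℝ be continuous, and let x, y : [r,T] → ℝ be continuous functions satisfying x(t) = ω(t) + ∫_r^t b(x(s)) ds + ζ(t) and y(t) = ω(t) + η(t) + ∫_r^t b(y(s)) ds + ζ(t) for all t ∈ [r,T]. Let γ : [r,T] → ℝ be the continuous function satisfying γ(t) = η(t) + ∫_r^t b′(x(s)) γ(s) ds for all t ∈ [r,T]. Then there exists a constant C, depending only on L, M and T−r, such that sup_{t ∈ [r,T]} | y(t) − x(t) − γ(t) | ≤ C · (sup_{t ∈ [r,T]} |η(t)|)². -/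

import Mathlib

open MeasureTheory intervalIntegral

/-- The sup norm `‖f‖_∞ = sup_{t ∈ [r,T]} |f t|` on `[r,T]`. -/
noncomputable def supAbs (r T : ℝ) (f : ℝ → ℝ) : ℝ :=
  sSup ((fun t => |f t|) '' Set.Icc r T)

/-- Global Lipschitz bound from a derivative bound. -/
lemma lip_of_deriv {f f' : ℝ → ℝ} {C : ℝ} (hf : ∀ x, HasDerivAt f (f' x) x)
    (hb : ∀ x, |f' x| ≤ C) (x y : ℝ) : |f y - f x| ≤ C * |y - x| := by
  have hconv : Convex ℝ (Set.univ : Set ℝ) := convex_univ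
  have := hconv.norm_image_sub_le_of_norm_hasDerivWithin_le
    (f := f) (f' := f') (fun z _ => (hf z).hasDerivWithinAt) (fun z _ => hb z)
    (Set.mem_univ x) (Set.mem_univ y)
  simpa [Real.norm_eq_abs] using this

/-- Second order Taylor bound. -/
lemma taylor_bd {b b' b'' : ℝ → ℝ} {M : ℝ} (hb : ∀ x, HasDerivAt b (b' x) x)
    (hb' : ∀ x, HasDerivAt b' (b'' x) x) (hM : ∀ x, |b'' x| ≤ M) (x y : ℝ) :
    |b y - b x - b' x * (y - x)| ≤ M * (y - x) ^ 2 := by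
  have hlip : ∀ z, |b' z - b' x| ≤ M * |z - x| := fun z => lip_of_deriv hb' hM x z
  have key := (convex_uIcc x y).norm_image_sub_le_of_norm_hasDerivWithin_le
    (f := fun z => b z - b' x * z) (f' := fun z => b' z - b' x)
    (fun z _ => by
      simpa [Pi.sub_def] using ((hb z).sub ((hasDerivAt_id z).const_mul (b' x))).hasDerivWithinAt)
    (fun z hz => by
      have h1 := hlip z
      have hM0 : 0 ≤ M := (abs_nonneg _).trans (hM x)
      have hz' : |z - x| ≤ |y - x| := by
        rcases Set.mem_uIcc.1 hz with ⟨h2, h3⟩ | ⟨h2, h3⟩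
        · rw [abs_of_nonneg (by linarith)]
          exact le_trans (by linarith) (le_abs_self (y - x))
        · rw [abs_of_nonpos (by linarith)]
          exact le_trans (by linarith) (neg_le_abs (y - x))
      calc ‖b' z - b' x‖ = |b' z - b' x| := rfl
        _ ≤ M * |z - x| := h1
        _ ≤ M * |y - x| := by nlinarith)
    Set.left_mem_uIcc Set.right_mem_uIcc
  have : ‖(b y - b' x * y) - (b x - b' x * x)‖ = |b y - b x - b' x * (y - x)| := by
    rw [Real.norm_eq_abs]; ring_nf
  rw [this, Real.norm_eq_abs] at key
  calc |b y - b x - b' x * (y - x)| ≤ M * |y - x| * |y - x| := key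
    _ = M * (y - x) ^ 2 := by rw [mul_assoc, ← abs_mul, ← sq, abs_sq]

/-- Integral form of Grönwall's inequality on `[r,T]`. -/
lemma gronwall_int {r T a K : ℝ} (hrT : r ≤ T) (ha : 0 ≤ a) (hK : 0 ≤ K)
    {u : ℝ → ℝ} (hu : ContinuousOn u (Set.Icc r T))
    (h : ∀ t ∈ Set.Icc r T, |u t| ≤ a + K * ∫ s in r..t, |u s|) :
    ∀ t ∈ Set.Icc r T, |u t| ≤ a * Real.exp (K * (T - r)) := by
  -- clamp of `|u|`, continuous on all of `ℝ`
  set g : ℝ → ℝ := fun s => |u (max r (min s T))| with hgdef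
  have hgc : Continuous g := by
    apply (hu.abs).comp_continuous
    · exact continuous_const.max (continuous_id.min continuous_const)
    · intro s
      constructor
      · exact le_max_left _ _
      · exact max_le hrT (min_le_right _ _)
  have hgeq : ∀ s ∈ Set.Icc r T, g s = |u s| := by
    intro s hs
    simp only [hgdef, min_eq_left hs.2, max_eq_right hs.1]
  have hint_eq : ∀ t ∈ Set.Icc r T, (∫ s in r..t, g s) = ∫ s in r..t, |u s| := by
    intro t ht
    apply intervalIntegral.integral_congr
    intro s hs
    rw [Set.uIcc_of_le ht.1] at hs
    exact hgeq s ⟨hs.1, hs.2.trans ht.2⟩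
  set v : ℝ → ℝ := fun t => ∫ s in r..t, g s with hvdef
  have hv : ∀ t : ℝ, HasDerivAt v (g t) t := fun t =>
    intervalIntegral.integral_hasDerivAt_right (hgc.intervalIntegrable r t)
      (hgc.stronglyMeasurableAtFilter _ _) hgc.continuousAt
  have hvc : Continuous v := by
    rw [continuous_iff_continuousAt]; exact fun t => (hv t).continuousAt
  have hvnonneg : ∀ t ∈ Set.Icc r T, 0 ≤ v t := by
    intro t ht
    exact intervalIntegral.integral_nonneg ht.1 (fun s _ => abs_nonneg _)
  have key : ∀ t ∈ Set.Icc r T, ‖v t‖ ≤ gronwallBound 0 K a (t - r) := by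
    apply norm_le_gronwallBound_of_norm_deriv_right_le (f' := g)
      hvc.continuousOn (fun t _ => (hv t).hasDerivWithinAt)
    · simp [hvdef]
    · intro t ht
      have ht' : t ∈ Set.Icc r T := ⟨ht.1, ht.2.le⟩
      rw [Real.norm_eq_abs, Real.norm_eq_abs, abs_of_nonneg (hvnonneg t ht'),
        hgeq t ht', abs_abs]
      have := h t ht'
      rw [← hint_eq t ht'] at this
      linarith
  intro t ht
  have hvt : v t ≤ gronwallBound 0 K a (t - r) := by
    have := key t ht
    rwa [Real.norm_eq_abs, abs_of_nonneg (hvnonneg t ht)] at this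
  have h1 : |u t| ≤ a + K * v t := by
    have := h t ht
    rwa [← hint_eq t ht] at this
  have h2 : a + K * gronwallBound 0 K a (t - r) ≤ a * Real.exp (K * (T - r)) := by
    rcases eq_or_lt_of_le hK with hK0 | hK0
    · rw [← hK0]
      simp [gronwallBound_K0]
    · rw [gronwallBound_of_K_ne_0 hK0.ne']
      have hexp : Real.exp (K * (t - r)) ≤ Real.exp (K * (T - r)) := by
        apply Real.exp_le_exp.2
        have : t - r ≤ T - r := by linarith [ht.2]
        nlinarith
      have : a + K * (0 * Real.exp (K * (t - r)) + a / K * (Real.exp (K * (t - r)) - 1))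
          = a * Real.exp (K * (t - r)) := by
        field_simp
        ring
      rw [this]
      nlinarith
  calc |u t| ≤ a + K * v t := h1
    _ ≤ a + K * gronwallBound 0 K a (t - r) := by nlinarith
    _ ≤ a * Real.exp (K * (T - r)) := h2

theorem stmt_14 (L M Δ : ℝ) (hL : 0 ≤ L) (hM : 0 ≤ M) :
    ∃ C : ℝ, ∀ r T : ℝ, r ≤ T → T - r = Δ →
      ∀ b b' b'' : ℝ → ℝ,
        (∀ x : ℝ, HasDerivAt b (b' x) x) →
        (∀ x : ℝ, HasDerivAt b' (b'' x) x) →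
        (∀ x : ℝ, |b' x| ≤ L) → (∀ x : ℝ, |b'' x| ≤ M) →
      ∀ ω η ζ x y γ : ℝ → ℝ,
        ContinuousOn ω (Set.Icc r T) → ContinuousOn η (Set.Icc r T) →
        ContinuousOn ζ (Set.Icc r T) →
        ContinuousOn x (Set.Icc r T) → ContinuousOn y (Set.Icc r T) →
        ContinuousOn γ (Set.Icc r T) →
        (∀ t ∈ Set.Icc r T, x t = ω t + (∫ s in r..t, b (x s)) + ζ t) →
        (∀ t ∈ Set.Icc r T, y t = ω t + η t + (∫ s in r..t, b (y s)) + ζ t) →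
        (∀ t ∈ Set.Icc r T, γ t = η t + ∫ s in r..t, b' (x s) * γ s) →
        ∀ t ∈ Set.Icc r T, |y t - x t - γ t| ≤ C * (supAbs r T η) ^ 2 := by
  refine ⟨M * Δ * Real.exp (3 * (L * Δ)), ?_⟩
  intro r T hrT hΔ b b' b'' hb hb' hbL hbM ω η ζ x y γ hω hη hζ hx hy hγ hxeq hyeq hγeq
  subst hΔ
  -- basic facts about ε = supAbs r T η
  set ε := supAbs r T η with hεdef
  have hIcc : (r : ℝ) ∈ Set.Icc r T := ⟨le_refl r, hrT⟩
  have hbdd : BddAbove ((fun t => |η t|) '' Set.Icc r T) :=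
    (isCompact_Icc.image_of_continuousOn hη.abs).bddAbove
  have hεb : ∀ t ∈ Set.Icc r T, |η t| ≤ ε := fun t ht =>
    le_csSup hbdd (Set.mem_image_of_mem _ ht)
  have hε0 : 0 ≤ ε := (abs_nonneg _).trans (hεb r hIcc)
  -- continuity of b and b'
  have hbc : Continuous b := by
    rw [continuous_iff_continuousAt]; exact fun t => (hb t).continuousAt
  have hb'c : Continuous b' := by
    rw [continuous_iff_continuousAt]; exact fun t => (hb' t).continuousAt
  -- integrability helper
  have hsub : ∀ t ∈ Set.Icc r T, Set.uIcc r t ⊆ Set.Icc r T := by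
    intro t ht
    rw [Set.uIcc_of_le ht.1]
    exact Set.Icc_subset_Icc_right ht.2
  have hInt : ∀ (f : ℝ → ℝ), ContinuousOn f (Set.Icc r T) →
      ∀ t ∈ Set.Icc r T, IntervalIntegrable f volume r t := by
    intro f hf t ht
    exact (hf.mono (hsub t ht)).intervalIntegrable
  -- continuity on Icc of compound integrands
  have hbyc : ContinuousOn (fun s => b (y s)) (Set.Icc r T) := hbc.comp_continuousOn hy
  have hbxc : ContinuousOn (fun s => b (x s)) (Set.Icc r T) := hbc.comp_continuousOn hx
  have hb'γc : ContinuousOn (fun s => b' (x s) * γ s) (Set.Icc r T) :=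
    (hb'c.comp_continuousOn hx).mul hγ
  have huc : ContinuousOn (fun t => y t - x t) (Set.Icc r T) := hy.sub hx
  have hzc : ContinuousOn (fun t => y t - x t - γ t) (Set.Icc r T) := huc.sub hγ
  -- Step 1 : bound on u = y - x
  have hu_eq : ∀ t ∈ Set.Icc r T,
      y t - x t = η t + ∫ s in r..t, (b (y s) - b (x s)) := by
    intro t ht
    rw [hyeq t ht, hxeq t ht,
      intervalIntegral.integral_sub (hInt _ hbyc t ht) (hInt _ hbxc t ht)]
    ring
  have hstep1 : ∀ t ∈ Set.Icc r T,
      |y t - x t| ≤ ε * Real.exp (L * (T - r)) := by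
    apply gronwall_int hrT hε0 hL huc
    intro t ht
    rw [hu_eq t ht]
    have h1 : |∫ s in r..t, (b (y s) - b (x s))| ≤ ∫ s in r..t, |b (y s) - b (x s)| :=
      intervalIntegral.abs_integral_le_integral_abs ht.1
    have h2 : (∫ s in r..t, |b (y s) - b (x s)|) ≤ ∫ s in r..t, L * |y s - x s| := by
      apply intervalIntegral.integral_mono_on ht.1
        (hInt _ (hbyc.sub hbxc).abs t ht)
        (hInt _ (continuousOn_const.mul huc.abs) t ht)
      intro s hs
      exact lip_of_deriv hb hbL (x s) (y s)
    have h3 : (∫ s in r..t, L * |y s - x s|) = L * ∫ s in r..t, |y s - x s| :=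
      intervalIntegral.integral_const_mul L _
    calc |η t + ∫ s in r..t, (b (y s) - b (x s))|
        ≤ |η t| + |∫ s in r..t, (b (y s) - b (x s))| := abs_add_le _ _
      _ ≤ ε + L * ∫ s in r..t, |y s - x s| := by
          rw [← h3]; exact add_le_add (hεb t ht) (h1.trans h2)
  set A := ε * Real.exp (L * (T - r)) with hAdef
  have hA0 : 0 ≤ A := mul_nonneg hε0 (Real.exp_pos _).le
  -- Step 2 : bound on z = y - x - γ
  have hz_eq : ∀ t ∈ Set.Icc r T,
      y t - x t - γ t = ∫ s in r..t, (b (y s) - b (x s) - b' (x s) * γ s) := by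
    intro t ht
    rw [hu_eq t ht, hγeq t ht,
      intervalIntegral.integral_sub (hInt (fun s => b (y s) - b (x s)) (hbyc.sub hbxc) t ht)
        (hInt _ hb'γc t ht)]
    ring
  have hpt : ∀ s ∈ Set.Icc r T,
      |b (y s) - b (x s) - b' (x s) * γ s|
        ≤ M * A ^ 2 + L * |y s - x s - γ s| := by
    intro s hs
    have htay := taylor_bd hb hb' hbM (x s) (y s)
    have hLs := hbL (x s)
    have hus := hstep1 s hs
    have h4 : |b' (x s) * (y s - x s - γ s)| ≤ L * |y s - x s - γ s| := by
      rw [abs_mul]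
      exact mul_le_mul_of_nonneg_right hLs (abs_nonneg _)
    have h5 : M * (y s - x s) ^ 2 ≤ M * A ^ 2 := by
      apply mul_le_mul_of_nonneg_left _ hM
      calc (y s - x s) ^ 2 = |y s - x s| ^ 2 := (sq_abs _).symm
        _ ≤ A ^ 2 := by nlinarith [abs_nonneg (y s - x s)]
    calc |b (y s) - b (x s) - b' (x s) * γ s|
        = |(b (y s) - b (x s) - b' (x s) * (y s - x s))
            + b' (x s) * (y s - x s - γ s)| := by ring_nf
      _ ≤ |b (y s) - b (x s) - b' (x s) * (y s - x s)|
            + |b' (x s) * (y s - x s - γ s)| := abs_add_le _ _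
      _ ≤ M * A ^ 2 + L * |y s - x s - γ s| := by
          have := htay.trans h5
          linarith
  have hstep2 : ∀ t ∈ Set.Icc r T,
      |y t - x t - γ t| ≤ (M * A ^ 2 * (T - r)) * Real.exp (L * (T - r)) := by
    apply gronwall_int hrT
      (mul_nonneg (mul_nonneg hM (sq_nonneg A)) (sub_nonneg.2 hrT)) hL hzc
    intro t ht
    rw [hz_eq t ht]
    have h1 : |∫ s in r..t, (b (y s) - b (x s) - b' (x s) * γ s)|
        ≤ ∫ s in r..t, |b (y s) - b (x s) - b' (x s) * γ s| :=
      intervalIntegral.abs_integral_le_integral_abs ht.1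
    have h2 : (∫ s in r..t, |b (y s) - b (x s) - b' (x s) * γ s|)
        ≤ ∫ s in r..t, (M * A ^ 2 + L * |y s - x s - γ s|) := by
      apply intervalIntegral.integral_mono_on ht.1
        (hInt _ ((hbyc.sub hbxc).sub hb'γc).abs t ht)
        (hInt _ (continuousOn_const.add (continuousOn_const.mul hzc.abs)) t ht)
      intro s hs
      exact hpt s ⟨hs.1, hs.2.trans ht.2⟩
    have h3 : (∫ s in r..t, (M * A ^ 2 + L * |y s - x s - γ s|))
        = M * A ^ 2 * (t - r) + L * ∫ s in r..t, |y s - x s - γ s| := by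
      rw [intervalIntegral.integral_add (intervalIntegrable_const)
        ((hInt (fun s => L * |y s - x s - γ s|) (continuousOn_const.mul hzc.abs) t ht)),
        intervalIntegral.integral_const, intervalIntegral.integral_const_mul]
      simp [mul_comm]
    have h4 : M * A ^ 2 * (t - r) ≤ M * A ^ 2 * (T - r) := by
      have h5 : t - r ≤ T - r := by linarith [ht.2]
      exact mul_le_mul_of_nonneg_left h5 (mul_nonneg hM (sq_nonneg A))
    calc |∫ s in r..t, (b (y s) - b (x s) - b' (x s) * γ s)|
        ≤ M * A ^ 2 * (t - r) + L * ∫ s in r..t, |y s - x s - γ s| := by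
          rw [← h3]; exact h1.trans h2
      _ ≤ M * A ^ 2 * (T - r) + L * ∫ s in r..t, |y s - x s - γ s| := by linarith
  -- finish
  intro t ht
  have := hstep2 t ht
  have hfin : (M * A ^ 2 * (T - r)) * Real.exp (L * (T - r))
      = M * (T - r) * Real.exp (3 * (L * (T - r))) * ε ^ 2 := by
    rw [hAdef]
    rw [show (3 : ℝ) * (L * (T - r)) = ((3 : ℕ) : ℝ) * (L * (T - r)) by norm_num,
      Real.exp_nat_mul]
    ring
  rw [hfin] at this
  exact this
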